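/- Let T be a finite rooted tree with a friendly labeling function L : G → 𝓛, and let e be an interior edge of T. Let g = Π_{i=1}^d q_{(l_i,m_i)} − Π_{i=1}^d q_{(l'_i,m_i)} be a binomial in the toric ideal I_{T_{e,−},L}, written so that the labels m_1,…,m_d on the edge e agree row by row, and let n_1,…,n_d be labelings such that each (m_i, n_i) is a consistent labeling of T_{e,+}. Then every (l_i, m_i, n_i) and every (l'_i, m_i, n_i) is a consistent labeling of T, and the binomial g* = Π_{i=1}^d q_{(l_i,m_i,n_i)} − Π_{i=1}^d q_{(l'_i,m_i,n_i)} lies in the toric ideal I_{T,L}. -/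

import Mathlib

open MvPolynomial

attribute [local instance] Classical.propDecidable

/-- The set `Z_m ⊆ G^m` of tuples with `g_1 + ⋯ + g_{m-1} = g_m`. -/
def ZSet (G : Type) [AddCommGroup G] (m : ℕ) : Set (Fin m → G) :=
  {g | (∑ i ∈ Finset.univ.filter fun i : Fin m => (i : ℕ) < m - 1, g i) =
       ∑ i ∈ Finset.univ.filter fun i : Fin m => ¬ (i : ℕ) < m - 1, g i}

/-- A labeling function `L : G → 𝓛` is `m`-friendly if for every tuple in `Z_m`, every
value with the same label at a coordinate can be realized at that coordinate by another
tuple in `Z_m` with the same label vector. -/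
def IsMFriendly {G 𝓛 : Type} [AddCommGroup G] (L : G → 𝓛) (m : ℕ) : Prop :=
  ∀ g ∈ ZSet G m, ∀ i : Fin m, ∀ h : G, L h = L (g i) →
    ∃ g' ∈ ZSet G m, (∀ j, L (g' j) = L (g j)) ∧ g' i = h

/-- A labeling function is friendly if it is `m`-friendly for all `m ≥ 3`. -/
def Friendly {G 𝓛 : Type} [AddCommGroup G] (L : G → 𝓛) : Prop :=
  ∀ m, 3 ≤ m → IsMFriendly L m

/-- A finite rooted tree, given by a parent function on a finite vertex set. -/
structure PhyloTree where
  V : Type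
  fintypeV : Fintype V
  root : V
  parent : V → V
  parent_root : parent root = root
  reaches_root : ∀ v, ∃ n : ℕ, parent^[n] v = root

attribute [instance] PhyloTree.fintypeV

namespace PhyloTree

variable (T : PhyloTree)

/-- A vertex is a leaf if it has no children. -/
def IsLeaf (v : T.V) : Prop := ∀ u, T.parent u = v → u = v

/-- The type of leaves of `T`. -/
def Leaf : Type := {v : T.V // T.IsLeaf v}

noncomputable instance : Fintype T.Leaf :=
  have : DecidablePred T.IsLeaf := Classical.decPred _
  Subtype.fintype _

/-- `u` is a (weak) descendant of `v`. -/
def Desc (u v : T.V) : Prop := ∃ n : ℕ, T.parent^[n] u = v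

/-- The edges of `T` are indexed by its vertices: a vertex `v` indexes the edge from
`parent v` to `v`, and the root indexes the extra pendant root edge `e_r`.
`leavesBelow v` is the set `Λ(e)` of leaves below the edge indexed by `v`. -/
noncomputable def leavesBelow (v : T.V) : Finset T.Leaf :=
  Finset.univ.filter fun l => T.Desc l.1 v

/-- An edge is interior if its lower endpoint is neither a leaf nor the root
(the latter excluding the pendant root edge). -/
def InteriorEdge (e : T.V) : Prop := ¬ T.IsLeaf e ∧ e ≠ T.root

/-- The edge set of the subtree `T_{e,-}`: the edge `e` together with all edges below it. -/
def Eminus (e : T.V) : Set T.V := {e' | T.Desc e' e}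

/-- The edge set of the subtree `T_{e,+}`: the edge `e` together with all edges not in `T_{e,-}`. -/
def Eplus (e : T.V) : Set T.V := {e' | e' = e ∨ ¬ T.Desc e' e}

theorem mem_Eminus_self (e : T.V) : e ∈ T.Eminus e := ⟨0, rfl⟩

theorem mem_Eplus_self (e : T.V) : e ∈ T.Eplus e := Or.inl rfl

variable {G 𝓛 : Type} [AddCommGroup G] [Fintype G]

/-- `g(e)`: the sum of the group elements at the leaves below the edge `e`. -/
noncomputable def gsum (g : T.Leaf → G) (e : T.V) : G := ∑ l ∈ T.leavesBelow e, g l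

/-- The consistent labelings of the subtree with edge set `S`. -/
def consLab (L : G → 𝓛) (S : Set T.V) : Set (↥S → 𝓛) :=
  Set.range fun g : T.Leaf → G => fun e' : ↥S => L (T.gsum g e'.1)

/-- The consistent labelings of the whole tree `T`, i.e. the image of `L^T`. -/
def consLabFull (L : G → 𝓛) : Set (T.V → 𝓛) :=
  Set.range fun g : T.Leaf → G => fun e : T.V => L (T.gsum g e)

/-- The toric ideal of the subtree with edge set `S` (in Fourier coordinates `q_λ`,
`λ` a consistent labeling): the kernel of the monomial map `q_λ ↦ ∏_e a^{(e)}_{λ(e)}`. -/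
noncomputable def toricIdeal (L : G → 𝓛) (S : Set T.V) :
    Ideal (MvPolynomial ↥(T.consLab L S) ℂ) :=
  RingHom.ker (aeval (R := ℂ)
    fun μ : ↥(T.consLab L S) => ∏ e' : ↥S, (X (e', μ.1 e') : MvPolynomial (↥S × 𝓛) ℂ))

/-- The toric ideal `I_{T,L}` of the tree `T`. -/
noncomputable def toricIdealFull (L : G → 𝓛) :
    Ideal (MvPolynomial ↥(T.consLabFull L) ℂ) :=
  RingHom.ker (aeval (R := ℂ)
    fun μ : ↥(T.consLabFull L) => ∏ e : T.V, (X (e, μ.1 e) : MvPolynomial (T.V × 𝓛) ℂ))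

/-- Glue a labeling of `T_{e,-}` and a labeling of `T_{e,+}` into a labeling of `T`. -/
noncomputable def glue (e : T.V) (μ : ↥(T.Eminus e) → 𝓛) (ν : ↥(T.Eplus e) → 𝓛) :
    T.V → 𝓛 :=
  fun e' => if h : T.Desc e' e then μ ⟨e', h⟩ else ν ⟨e', Or.inr h⟩

/-- `mix e λ₁ λ₂` agrees with `λ₁` on `T_{e,-}` and with `λ₂` on the rest of `T`. -/
noncomputable def mix (e : T.V) (f g : T.V → 𝓛) : T.V → 𝓛 :=
  fun e' => if T.Desc e' e then f e' else g e'

end PhyloTree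

/-!
Friendliness at a vertex lets one replace the group element on any one of its incident edges by
another element with the same label while the other incident edges keep their labels. Re-solving
the child subtrees recursively turns this into a modification of the leaf assignment below the
vertex, and repeating it along the path to the root shows that the value on any edge can be
replaced by any value with the same label without changing a single label of the tree. Hence
realizations of `(l, m)` below `e` and of `(m, n)` above `e` can be made to agree on `e` and
spliced. The binomial then follows formally: the monomial of `(l, m, n)` is the monomial of
`(l, m)`, renamed into the variables of `T`, times a factor depending only on `n`.
-/
theorem mem_ZSet_succ_iff {G : Type} [AddCommGroup G] {t : ℕ} {f : Fin (t + 1) → G} :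
    f ∈ ZSet G (t + 1) ↔ ∑ i : Fin t, f i.castSucc = f (Fin.last t) := by
  simp [ZSet, Finset.sum_filter, Fin.sum_univ_castSucc, fun x : Fin t => not_le.2 x.is_lt]

theorem Friendly.exists_relabel {G 𝓛 ι : Type} [AddCommGroup G] [DecidableEq ι] {L : G → 𝓛}
    (hL : Friendly L) {s : Finset ι} (hs : s.Nonempty) {p : ι} (hp : p ∉ s) {y : ι → G}
    (hy : y p = ∑ i ∈ s, y i) {u : ι} (hu : u ∈ insert p s) {x : G} (hx : L x = L (y u)) :
    ∃ y' : ι → G, y' p = ∑ i ∈ s, y' i ∧ (∀ i ∈ insert p s, L (y' i) = L (y i)) ∧ y' u = x := by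
  obtain ⟨c, rfl⟩ | hs := hs.exists_eq_singleton_or_nontrivial
  · refine ⟨fun _ => x, by simp, fun i hi => ?_, rfl⟩
    have hyc : y p = y c := by simpa using hy
    simp only [Finset.mem_insert, Finset.mem_singleton] at hi hu
    rcases hi with rfl | rfl <;> rcases hu with rfl | rfl <;> simp_all
  · set t := s.card
    have ht : 2 ≤ t := Finset.one_lt_card_iff_nontrivial.2 hs
    let σ := s.equivFin
    let idx : ι → Fin (t + 1) := fun i => if h : i ∈ s then (σ ⟨i, h⟩).castSucc else Fin.last t
    have sum_idx : ∀ f : Fin (t + 1) → G, ∑ i ∈ s, f (idx i) = ∑ j : Fin t, f j.castSucc := by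
      intro f
      rw [← Finset.sum_coe_sort, ← σ.sum_comp]
      exact Fintype.sum_congr _ _ fun i => by simp [idx]
    have idx_p : idx p = Fin.last t := dif_neg hp
    let a : Fin (t + 1) → G := Fin.snoc (fun j => y (σ.symm j)) (y p)
    have a_idx : ∀ i ∈ insert p s, a (idx i) = y i := by
      intro i hi
      rcases Finset.mem_insert.1 hi with rfl | hi
      · simp [a, idx_p]
      · simp [a, idx, hi]
    have ha : a ∈ ZSet G (t + 1) := by
      rw [mem_ZSet_succ_iff, ← sum_idx, ← idx_p, a_idx p (Finset.mem_insert_self p s), hy]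
      exact Finset.sum_congr rfl fun i hi => a_idx i (Finset.mem_insert_of_mem hi)
    obtain ⟨a', ha', hlab, hxu⟩ :=
      hL (t + 1) (by omega) a ha (idx u) x (by rw [a_idx u hu]; exact hx)
    refine ⟨a' ∘ idx, ?_, fun i hi => ?_, hxu⟩
    · simp only [Function.comp_apply, idx_p, sum_idx, mem_ZSet_succ_iff.1 ha']
    · simp only [Function.comp_apply, hlab, a_idx i hi]

namespace PhyloTree

noncomputable def children (T : PhyloTree) (v : T.V) : Finset T.V :=
  Finset.univ.filter fun u => T.parent u = v ∧ u ≠ v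

variable {T : PhyloTree}

theorem Desc.refl (v : T.V) : T.Desc v v := ⟨0, rfl⟩

theorem Desc.trans {u v w : T.V} (h₁ : T.Desc u v) (h₂ : T.Desc v w) : T.Desc u w := by
  obtain ⟨m, rfl⟩ := h₁
  obtain ⟨n, rfl⟩ := h₂
  exact ⟨n + m, Function.iterate_add_apply _ n m u⟩

theorem desc_root (v : T.V) : T.Desc v T.root := T.reaches_root v

theorem Desc.antisymm {u v : T.V} (h₁ : T.Desc u v) (h₂ : T.Desc v u) : u = v := by
  obtain ⟨m, rfl⟩ := h₁
  obtain ⟨n, hn⟩ := h₂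
  rcases Nat.eq_zero_or_pos m with rfl | hm
  · rfl
  have hper : Function.IsPeriodicPt T.parent (n + m) u := by
    rw [Function.IsPeriodicPt, Function.IsFixedPt, Function.iterate_add_apply, hn]
  obtain ⟨k, hk⟩ := T.reaches_root u
  -- a periodic point that reaches the fixed point `root` is `root`
  have hu : u = T.root :=
    calc u = T.parent^[(n + m) * k] u := (hper.mul_const k).eq.symm
      _ = T.parent^[(n + m) * k - k] (T.parent^[k] u) := by
        rw [← Function.iterate_add_apply, Nat.sub_add_cancel (Nat.le_mul_of_pos_left k (by omega))]
      _ = T.root := by rw [hk, Function.iterate_fixed T.parent_root]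
  rw [hu, Function.iterate_fixed T.parent_root]

theorem Desc.total {l u v : T.V} (hu : T.Desc l u) (hv : T.Desc l v) :
    T.Desc u v ∨ T.Desc v u := by
  obtain ⟨a, rfl⟩ := hu
  obtain ⟨b, rfl⟩ := hv
  rcases le_total a b with h | h
  · exact .inl ⟨b - a, by rw [← Function.iterate_add_apply, Nat.sub_add_cancel h]⟩
  · exact .inr ⟨a - b, by rw [← Function.iterate_add_apply, Nat.sub_add_cancel h]⟩

theorem IsLeaf.eq_of_desc {u v : T.V} (hv : T.IsLeaf v) (h : T.Desc u v) : u = v := by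
  obtain ⟨n, hn⟩ := h
  induction n generalizing u with
  | zero => exact hn
  | succ n ih => exact hv u (ih (by rwa [Function.iterate_succ_apply] at hn))

theorem mem_children {u v : T.V} : u ∈ T.children v ↔ T.parent u = v ∧ u ≠ v := by
  simp [children]

theorem desc_of_mem_children {c v : T.V} (hc : c ∈ T.children v) : T.Desc c v :=
  ⟨1, (mem_children.1 hc).1⟩

theorem self_notMem_children (v : T.V) : v ∉ T.children v := fun h => (mem_children.1 h).2 rfl

theorem children_nonempty_iff {v : T.V} : (T.children v).Nonempty ↔ ¬ T.IsLeaf v := by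
  simp [Finset.Nonempty, mem_children, IsLeaf]

theorem mem_children_parent {v : T.V} (hv : v ≠ T.root) : v ∈ T.children (T.parent v) := by
  refine mem_children.2 ⟨rfl, fun h => hv ?_⟩
  obtain ⟨n, hn⟩ := T.reaches_root v
  rw [← hn, Function.iterate_fixed h.symm]

theorem exists_mem_children_desc {u v : T.V} (h : T.Desc u v) (hne : u ≠ v) :
    ∃ c ∈ T.children v, T.Desc u c := by
  obtain ⟨n, hn⟩ := h
  induction n with
  | zero => exact absurd hn hne
  | succ n ih =>
    by_cases hc : T.parent^[n] u = v
    · exact ih hc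
    · rw [Function.iterate_succ_apply'] at hn
      exact ⟨_, mem_children.2 ⟨hn, hc⟩, n, rfl⟩

theorem eq_of_mem_children_of_desc {u c c' v : T.V} (hc : c ∈ T.children v)
    (hc' : c' ∈ T.children v) (hu : T.Desc u c) (hu' : T.Desc u c') : c = c' := by
  have key : ∀ {a b}, a ∈ T.children v → b ∈ T.children v → T.Desc a b → a = b := by
    rintro a b ha hb ⟨_ | m, hm⟩
    · exact hm
    · rw [mem_children] at ha hb
      rw [Function.iterate_succ_apply, ha.1] at hm
      exact absurd (Desc.antisymm ⟨1, hb.1⟩ ⟨m, hm⟩) hb.2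
  rcases hu.total hu' with h | h
  · exact key hc hc' h
  · exact (key hc' hc h).symm

theorem wellFounded_strictDesc : WellFounded fun u v : T.V => T.Desc u v ∧ u ≠ v := by
  have : IsTrans T.V fun u v => T.Desc u v ∧ u ≠ v :=
    ⟨fun a b c hab hbc => ⟨hab.1.trans hbc.1, fun h => hab.2 (hab.1.antisymm (h ▸ hbc.1))⟩⟩
  have : Std.Irrefl fun u v : T.V => T.Desc u v ∧ u ≠ v := ⟨fun _ h => h.2 rfl⟩
  exact Finite.wellFounded_of_trans_of_irrefl _

theorem exists_patch_children {α : Type} (v : T.V) (g : T.Leaf → α) (F : T.V → T.Leaf → α) :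
    ∃ g' : T.Leaf → α, (∀ l : T.Leaf, ¬ T.Desc l.1 v → g' l = g l) ∧
      ∀ c ∈ T.children v, ∀ l : T.Leaf, T.Desc l.1 c → g' l = F c l := by
  refine ⟨fun l => if h : ∃ c ∈ T.children v, T.Desc l.1 c then F h.choose l else g l,
    fun l hl => dif_neg ?_, fun c hc l hl => ?_⟩
  · rintro ⟨c, hc, hlc⟩
    exact hl (hlc.trans (desc_of_mem_children hc))
  · have h : ∃ c ∈ T.children v, T.Desc l.1 c := ⟨c, hc, hl⟩
    simp only [dif_pos h, eq_of_mem_children_of_desc h.choose_spec.1 hc h.choose_spec.2 hl]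

variable {G 𝓛 : Type} [AddCommGroup G]

theorem mem_leavesBelow {l : T.Leaf} {v : T.V} : l ∈ T.leavesBelow v ↔ T.Desc l.1 v := by
  simp [leavesBelow]

theorem gsum_congr {g g' : T.Leaf → G} {v : T.V} (h : ∀ l : T.Leaf, T.Desc l.1 v → g l = g' l) :
    T.gsum g v = T.gsum g' v :=
  Finset.sum_congr rfl fun l hl => h l (mem_leavesBelow.1 hl)

theorem gsum_of_isLeaf (g : T.Leaf → G) {v : T.V} (hv : T.IsLeaf v) :
    T.gsum g v = g (⟨v, hv⟩ : T.Leaf) := by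
  refine Finset.sum_eq_single_of_mem _ (mem_leavesBelow.2 (Desc.refl v)) fun l hl hne => ?_
  exact absurd (Subtype.ext (hv.eq_of_desc (mem_leavesBelow.1 hl))) hne

theorem gsum_eq_sum_children (g : T.Leaf → G) {v : T.V} (hv : ¬ T.IsLeaf v) :
    T.gsum g v = ∑ c ∈ T.children v, T.gsum g c := by
  have hcover : T.leavesBelow v = (T.children v).biUnion T.leavesBelow := by
    ext l
    simp only [Finset.mem_biUnion, mem_leavesBelow]
    refine ⟨fun h => exists_mem_children_desc h fun he => hv (he ▸ l.2), ?_⟩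
    rintro ⟨c, hc, hl⟩
    exact hl.trans (desc_of_mem_children hc)
  have hdisj : (T.children v : Set T.V).PairwiseDisjoint T.leavesBelow :=
    fun c hc c' hc' hne => Finset.disjoint_left.2 fun l hl hl' =>
      hne (eq_of_mem_children_of_desc hc hc' (mem_leavesBelow.1 hl) (mem_leavesBelow.1 hl'))
  rw [gsum, hcover, Finset.sum_biUnion hdisj]
  rfl

noncomputable def splice (T : PhyloTree) (w : T.V) (g₁ g₂ : T.Leaf → G) : T.Leaf → G :=
  fun l => if T.Desc l.1 w then g₁ l else g₂ l

theorem gsum_splice_of_desc {g₁ g₂ : T.Leaf → G} {w e : T.V} (he : T.Desc e w) :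
    T.gsum (T.splice w g₁ g₂) e = T.gsum g₁ e :=
  gsum_congr fun _ hl => if_pos (hl.trans he)

theorem gsum_splice_of_not_desc {g₁ g₂ : T.Leaf → G} {w e : T.V}
    (hw : T.gsum g₁ w = T.gsum g₂ w) (he : ¬ T.Desc e w) :
    T.gsum (T.splice w g₁ g₂) e = T.gsum g₂ e := by
  set below := (T.leavesBelow e).filter fun l => T.Desc l.1 w
  have hbelow : ∑ l ∈ below, g₁ l = ∑ l ∈ below, g₂ l := by
    by_cases hwe : T.Desc w e
    · have : below = T.leavesBelow w := by
        ext l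
        simp only [below, Finset.mem_filter, mem_leavesBelow]
        exact ⟨And.right, fun h => ⟨h.trans hwe, h⟩⟩
      rwa [this]
    · have : below = ∅ := Finset.filter_eq_empty_iff.2 fun l hl hlw =>
        ((mem_leavesBelow.1 hl).total hlw).elim he hwe
      simp [this]
  rw [gsum, gsum, ← Finset.sum_filter_add_sum_filter_not _ (fun l => T.Desc l.1 w),
    ← Finset.sum_filter_add_sum_filter_not _ (fun l => T.Desc l.1 w) g₂, ← hbelow]
  congr 1 <;> refine Finset.sum_congr rfl fun l hl => ?_ <;>
    simp [splice, (Finset.mem_filter.1 hl).2]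

variable (L : G → 𝓛)

def KeepsLabelsBelow (T : PhyloTree) (v : T.V) (g g' : T.Leaf → G) : Prop :=
  (∀ l : T.Leaf, ¬ T.Desc l.1 v → g' l = g l) ∧
    ∀ e, T.Desc e v → L (T.gsum g' e) = L (T.gsum g e)

def AdjustableWithin (T : PhyloTree) (v u : T.V) : Prop :=
  ∀ (g : T.Leaf → G) (x : G), L x = L (T.gsum g u) →
    ∃ g', T.KeepsLabelsBelow L v g g' ∧ T.gsum g' u = x

variable {L}

theorem KeepsLabelsBelow.splice {v w : T.V} {g g₁ g₂ : T.Leaf → G}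
    (h₁ : T.KeepsLabelsBelow L w g g₁) (h₂ : T.KeepsLabelsBelow L v g g₂) (hwv : T.Desc w v)
    (hw : T.gsum g₁ w = T.gsum g₂ w) : T.KeepsLabelsBelow L v g (T.splice w g₁ g₂) := by
  refine ⟨fun l hl => ?_, fun e he => ?_⟩
  · rw [PhyloTree.splice, if_neg fun h => hl (h.trans hwv), h₂.1 l hl]
  · by_cases hew : T.Desc e w
    · rw [gsum_splice_of_desc hew, h₁.2 e hew]
    · rw [gsum_splice_of_not_desc hw hew, h₂.2 e he]

theorem adjustableWithin_self_of_isLeaf {v : T.V} (hv : T.IsLeaf v) :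
    T.AdjustableWithin L v v := by
  intro g x hx
  have hval : T.gsum (Function.update g (⟨v, hv⟩ : T.Leaf) x) v = x := by
    rw [gsum_of_isLeaf _ hv]
    exact Function.update_self _ _ _
  refine ⟨_, ⟨fun l hl => Function.update_of_ne (fun h => hl ?_) _ _, fun e he => ?_⟩, hval⟩
  · rw [h]
    exact Desc.refl v
  · rw [hv.eq_of_desc he, hval, hx]

theorem adjustableWithin_of_children (hL : Friendly L) {v u : T.V} (hv : ¬ T.IsLeaf v)
    (hc : ∀ c ∈ T.children v, T.AdjustableWithin L c c) (hu : u ∈ insert v (T.children v)) :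
    T.AdjustableWithin L v u := by
  intro g x hx
  obtain ⟨y, hy_sum, hy_lab, hy_u⟩ := hL.exists_relabel (children_nonempty_iff.2 hv)
    (self_notMem_children v) (gsum_eq_sum_children g hv) hu hx
  choose! F hF hFy using fun c hc' => hc c hc' g (y c) (hy_lab c (Finset.mem_insert_of_mem hc'))
  obtain ⟨g', hg'_out, hg'_below⟩ := exists_patch_children v g F
  have hval : ∀ w ∈ insert v (T.children v), T.gsum g' w = y w := by
    have hchild : ∀ c ∈ T.children v, T.gsum g' c = y c := fun c hc' =>
      (gsum_congr fun l hl => hg'_below c hc' l hl).trans (hFy c hc')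
    intro w hw
    rcases Finset.mem_insert.1 hw with rfl | hw
    · rw [gsum_eq_sum_children g' hv, Finset.sum_congr rfl hchild, hy_sum]
    · exact hchild w hw
  refine ⟨g', ⟨hg'_out, fun e he => ?_⟩, (hval u hu).trans hy_u⟩
  by_cases hev : e = v
  · subst hev
    rw [hval e (Finset.mem_insert_self _ _)]
    exact hy_lab e (Finset.mem_insert_self _ _)
  · obtain ⟨c, hc', hec⟩ := exists_mem_children_desc he hev
    rw [gsum_congr fun l hl => hg'_below c hc' l (hl.trans hec)]
    exact (hF c hc').2 e hec

theorem adjustableWithin_self (hL : Friendly L) (v : T.V) : T.AdjustableWithin L v v :=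
  wellFounded_strictDesc.induction (C := fun v => T.AdjustableWithin L v v) v fun v ih =>
    if hv : T.IsLeaf v then adjustableWithin_self_of_isLeaf hv
    else adjustableWithin_of_children hL hv
      (fun c hc => ih c ⟨desc_of_mem_children hc, (mem_children.1 hc).2⟩)
      (Finset.mem_insert_self v _)

theorem AdjustableWithin.parent (hL : Friendly L) {w u : T.V} (hwu : T.AdjustableWithin L w u)
    (hu : T.Desc u w) : T.AdjustableWithin L (T.parent w) u := by
  by_cases hw : w = T.root
  · rw [hw, T.parent_root]
    rwa [hw] at hwu
  have hwp := mem_children_parent hw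
  have hpw : T.AdjustableWithin L (T.parent w) w :=
    adjustableWithin_of_children hL (children_nonempty_iff.1 ⟨w, hwp⟩)
      (fun c _ => adjustableWithin_self hL c) (Finset.mem_insert_of_mem hwp)
  intro g x hx
  obtain ⟨g₁, hg₁, hg₁u⟩ := hwu g x hx
  obtain ⟨g₂, hg₂, hg₂w⟩ := hpw g (T.gsum g₁ w) (hg₁.2 w (Desc.refl w))
  exact ⟨T.splice w g₁ g₂, hg₁.splice hg₂ (desc_of_mem_children hwp) hg₂w.symm,
    (gsum_splice_of_desc hu).trans hg₁u⟩

theorem adjustableWithin_root (hL : Friendly L) (u : T.V) : T.AdjustableWithin L T.root u := by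
  have h : ∀ n, T.AdjustableWithin L (T.parent^[n] u) u := by
    intro n
    induction n with
    | zero => exact adjustableWithin_self hL u
    | succ n ih =>
      rw [Function.iterate_succ_apply']
      exact ih.parent hL ⟨n, rfl⟩
  obtain ⟨n, hn⟩ := T.reaches_root u
  exact hn ▸ h n

theorem glue_mem (hL : Friendly L) (e : T.V) {μ : ↥(T.Eminus e) → 𝓛} {ν : ↥(T.Eplus e) → 𝓛}
    (hμ : μ ∈ T.consLab L (T.Eminus e)) (hν : ν ∈ T.consLab L (T.Eplus e))
    (hagree : ν ⟨e, T.mem_Eplus_self e⟩ = μ ⟨e, T.mem_Eminus_self e⟩) :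
    T.glue e μ ν ∈ T.consLabFull L := by
  obtain ⟨g, rfl⟩ := hμ
  obtain ⟨g', rfl⟩ := hν
  obtain ⟨g'', hg'', hg''e⟩ := adjustableWithin_root hL e g' (T.gsum g e) hagree.symm
  refine ⟨T.splice e g g'', funext fun e' => ?_⟩
  by_cases he' : T.Desc e' e
  · simp only [glue, dif_pos he', gsum_splice_of_desc he']
  · simp only [glue, dif_neg he', gsum_splice_of_not_desc hg''e.symm he']
    exact hg''.2 e' (desc_root e')

theorem prod_X_glue {R : Type} [CommSemiring R] (e : T.V) (μ : ↥(T.Eminus e) → 𝓛)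
    (ν : ↥(T.Eplus e) → 𝓛) :
    ∏ e' : T.V, (X (e', T.glue e μ ν e') : MvPolynomial (T.V × 𝓛) R) =
      rename (Prod.map Subtype.val id) (∏ x, X (x, μ x)) *
        ∏ x : {e' // e' ∉ T.Eminus e}, X (x.1, ν ⟨x.1, Or.inr x.2⟩) := by
  rw [← Fintype.prod_subtype_mul_prod_subtype (· ∈ T.Eminus e), map_prod]
  congr 1 <;> refine Fintype.prod_congr _ _ fun x => ?_
  · simp [glue, show T.Desc x.1 e from x.2]
  · simp [glue, show ¬ T.Desc x.1 e from x.2]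

end PhyloTree

theorem ext_binomial_mem_toricIdeal_general (T : PhyloTree) {G 𝓛 : Type}
    [AddCommGroup G]
    (L : G → 𝓛) (hL : Friendly L) (e : T.V)
    (d : ℕ) (r r' : Fin d → ↥(T.consLab L (T.Eminus e)))
    (hrow : ∀ i, (r i).1 ⟨e, T.mem_Eminus_self e⟩ = (r' i).1 ⟨e, T.mem_Eminus_self e⟩)
    (hbin : ((∏ i, X (r i)) - ∏ i, X (r' i)) ∈ T.toricIdeal L (T.Eminus e))
    (s : Fin d → ↥(T.consLab L (T.Eplus e)))
    (hs : ∀ i, (s i).1 ⟨e, T.mem_Eplus_self e⟩ = (r i).1 ⟨e, T.mem_Eminus_self e⟩) :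
    ∃ (h : ∀ i, T.glue e (r i).1 (s i).1 ∈ T.consLabFull L)
      (h' : ∀ i, T.glue e (r' i).1 (s i).1 ∈ T.consLabFull L),
      ((∏ i, X (⟨T.glue e (r i).1 (s i).1, h i⟩ : ↥(T.consLabFull L))) -
        ∏ i, X (⟨T.glue e (r' i).1 (s i).1, h' i⟩ : ↥(T.consLabFull L)))
        ∈ T.toricIdealFull L := by
  refine ⟨fun i => PhyloTree.glue_mem hL e (r i).2 (s i).2 (hs i),
    fun i => PhyloTree.glue_mem hL e (r' i).2 (s i).2 ((hs i).trans (hrow i)), ?_⟩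
  rw [PhyloTree.toricIdeal, RingHom.mem_ker, map_sub, sub_eq_zero] at hbin
  rw [PhyloTree.toricIdealFull, RingHom.mem_ker, map_sub, sub_eq_zero]
  simp only [map_prod, aeval_X] at hbin ⊢
  simp only [PhyloTree.prod_X_glue, Finset.prod_mul_distrib]
  congr 1
  simpa only [map_prod] using congrArg (rename (Prod.map Subtype.val id)) hbin

/-- **Lemma (extension of binomials).** For a friendly labeling `L` and an interior edge `e`,
a binomial `g = ∏ q_{(l_i,m_i)} − ∏ q_{(l'_i,m_i)}` of the toric ideal of `T_{e,-}` together
with labelings `n_i` of `T_{e,+} ∖ {e}` such that each `(m_i,n_i)` is a consistent labeling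
of `T_{e,+}` yields consistent labelings `(l_i,m_i,n_i)`, `(l'_i,m_i,n_i)` of `T`, and the
binomial `g* = ∏ q_{(l_i,m_i,n_i)} − ∏ q_{(l'_i,m_i,n_i)}` lies in `I_{T,L}`. -/
theorem ext_binomial_mem_toricIdeal (T : PhyloTree) {G 𝓛 : Type}
    [AddCommGroup G] [Fintype G]
    (L : G → 𝓛) (hL : Friendly L) (e : T.V) (he : T.InteriorEdge e)
    (d : ℕ) (r r' : Fin d → ↥(T.consLab L (T.Eminus e)))
    (hrow : ∀ i, (r i).1 ⟨e, T.mem_Eminus_self e⟩ = (r' i).1 ⟨e, T.mem_Eminus_self e⟩)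
    (hbin : ((∏ i, X (r i)) - ∏ i, X (r' i)) ∈ T.toricIdeal L (T.Eminus e))
    (s : Fin d → ↥(T.consLab L (T.Eplus e)))
    (hs : ∀ i, (s i).1 ⟨e, T.mem_Eplus_self e⟩ = (r i).1 ⟨e, T.mem_Eminus_self e⟩) :
    ∃ (h : ∀ i, T.glue e (r i).1 (s i).1 ∈ T.consLabFull L)
      (h' : ∀ i, T.glue e (r' i).1 (s i).1 ∈ T.consLabFull L),
      ((∏ i, X (⟨T.glue e (r i).1 (s i).1, h i⟩ : ↥(T.consLabFull L))) -
        ∏ i, X (⟨T.glue e (r' i).1 (s i).1, h' i⟩ : ↥(T.consLabFull L)))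
        ∈ T.toricIdealFull L :=
  ext_binomial_mem_toricIdeal_general T L hL e d r r' hrow hbin s hs
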